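/- arXiv:2511.05327 — 2 statements merged into one kernel-verified Lean document; each statement's English description precedes it below -/
import Mathlib

section
/- Let I_z, I_y ∈ ℝ^{m×m} be symmetric positive definite matrices and S ∈ ℝ^{m×m} symmetric positive definite. Suppose for all matrices A, B ∈ ℝ^{m×m} the inequality (A+B) I_z (A+B)ᵀ ≤ A I_y Aᵀ + B S Bᵀ holds. Then I_z ≤ (I_y⁻¹ + S⁻¹)⁻¹. -/
open Matrix

/-- If `(A+B) I_z (A+B)ᵀ ≤ A I_y Aᵀ + B S Bᵀ` for all matrices `A, B`, with
`I_z, I_y, S` symmetric positive definite, then `I_z ≤ (I_y⁻¹ + S⁻¹)⁻¹` in the Loewner order. -/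
theorem stmt_4 {m : ℕ} (Iz Iy S : Matrix (Fin m) (Fin m) ℝ)
    (hIz : Iz.PosDef) (hIy : Iy.PosDef) (hS : S.PosDef)
    (h : ∀ A B : Matrix (Fin m) (Fin m) ℝ,
      ((A * Iy * Aᵀ + B * S * Bᵀ) - (A + B) * Iz * (A + B)ᵀ).PosSemidef) :
    ((Iy⁻¹ + S⁻¹)⁻¹ - Iz).PosSemidef := by
  have hIyd : IsUnit Iy.det := (isUnit_iff_isUnit_det _).mp hIy.isUnit
  have hSd : IsUnit S.det := (isUnit_iff_isUnit_det _).mp hS.isUnit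
  have hIys : Iyᵀ = Iy := by
    rw [← conjTranspose_eq_transpose_of_trivial]; exact hIy.isHermitian.eq
  have hSs : Sᵀ = S := by
    rw [← conjTranspose_eq_transpose_of_trivial]; exact hS.isHermitian.eq
  have hIyi : Iy⁻¹ᵀ = Iy⁻¹ := by rw [transpose_nonsing_inv, hIys]
  have hSi : S⁻¹ᵀ = S⁻¹ := by rw [transpose_nonsing_inv, hSs]
  have hT : (Iy⁻¹ + S⁻¹).PosDef := hIy.inv.add hS.inv
  set T := Iy⁻¹ + S⁻¹ with hTdef
  have hTd : IsUnit T.det := (isUnit_iff_isUnit_det _).mp hT.isUnit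
  have key := h Iy⁻¹ S⁻¹
  have e1 : Iy⁻¹ * Iy * Iy⁻¹ᵀ = Iy⁻¹ := by
    rw [hIyi, nonsing_inv_mul _ hIyd, one_mul]
  have e2 : S⁻¹ * S * S⁻¹ᵀ = S⁻¹ := by
    rw [hSi, nonsing_inv_mul _ hSd, one_mul]
  rw [e1, e2] at key
  have key2 := key.mul_mul_conjTranspose_same T⁻¹
  have hTi : Tᵀ = T := by
    rw [← conjTranspose_eq_transpose_of_trivial]; exact hT.isHermitian.eq
  have hTii : T⁻¹ᵀ = T⁻¹ := by rw [transpose_nonsing_inv, hTi]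
  have heq : T⁻¹ * ((Iy⁻¹ + S⁻¹) - (Iy⁻¹ + S⁻¹) * Iz * (Iy⁻¹ + S⁻¹)ᵀ) * T⁻¹ᴴ
      = T⁻¹ - Iz := by
    rw [← hTdef, conjTranspose_eq_transpose_of_trivial, hTii,
      Matrix.mul_sub, Matrix.sub_mul, hTi,
      mul_nonsing_inv_cancel_right _ _ hTd,
      Matrix.mul_assoc T Iz T, nonsing_inv_mul_cancel_left _ _ hTd,
      Matrix.mul_assoc Iz T, mul_nonsing_inv _ hTd, mul_one]
  rwa [heq] at key2
end

section
/- Let S be a symmetric positive semidefinite m×m matrix and Q a symmetric positive definite m×m matrix. For ε > 0 set S_ε := (S^{1/2} + ε I)². Then (Q + S_ε^{-1})^{-1} = (S^{1/2}+εI)((S^{1/2}+εI) Q (S^{1/2}+εI) + I)^{-1}(S^{1/2}+εI), and as ε → 0 this converges to S^{1/2}(S^{1/2} Q S^{1/2} + I)^{-1} S^{1/2}. Consequently, if I_z ≤ (Q + S_ε^{-1})^{-1} for all ε > 0, then I_z ≤ S^{1/2}(S^{1/2} Q S^{1/2} + I)^{-1} S^{1/2}. -/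
open Matrix Filter

section

open scoped ComplexOrder

/-- The square root of a positive semidefinite matrix, as defined in Mathlib (Dec 2024),
since removed from Mathlib. -/
noncomputable def Matrix.PosSemidef.sqrt {n : Type*} {𝕜 : Type*} [Fintype n] [RCLike 𝕜]
    [DecidableEq n] {A : Matrix n n 𝕜} (hA : Matrix.PosSemidef A) : Matrix n n 𝕜 :=
  hA.1.eigenvectorUnitary.1 * diagonal ((↑) ∘ (√·) ∘ hA.1.eigenvalues) *
  (star hA.1.eigenvectorUnitary : Matrix n n 𝕜)

end

private lemma smul_one_posDef' {m : ℕ} {ε : ℝ} (hε : 0 < ε) :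
    (ε • (1 : Matrix (Fin m) (Fin m) ℝ)).PosDef := by
  rw [smul_one_eq_diagonal]
  exact posDef_diagonal_iff.mpr fun _ => hε

private lemma key_eq' {m : ℕ} {Q : Matrix (Fin m) (Fin m) ℝ} (hQ : Q.PosDef)
    {A : Matrix (Fin m) (Fin m) ℝ} (hA : A.PosDef) :
    (Q + (A ^ 2)⁻¹)⁻¹ = A * (A * Q * A + 1)⁻¹ * A := by
  letI := hA.isUnit.invertible
  have hAQA : (A * Q * A).PosSemidef := by
    have := hQ.posSemidef.mul_mul_conjTranspose_same A
    rwa [hA.isHermitian.eq] at this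
  have hB : (A * Q * A + 1).PosDef := Matrix.PosDef.posSemidef_add hAQA Matrix.PosDef.one
  letI := hB.isUnit.invertible
  have h1 : Q + (A ^ 2)⁻¹ = A⁻¹ * (A * Q * A + 1) * A⁻¹ := by
    rw [pow_two, Matrix.mul_inv_rev, Matrix.mul_add, Matrix.add_mul, Matrix.mul_one]
    congr 1
    simp [Matrix.mul_assoc]
  rw [h1, Matrix.mul_inv_rev, Matrix.mul_inv_rev, Matrix.inv_inv_of_invertible]
  simp [Matrix.mul_assoc]

/-- For `S` PSD and `Q` PD, with `S_ε := (S^{1/2} + εI)²`, one has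
`(Q + S_ε⁻¹)⁻¹ = (S^{1/2}+εI)((S^{1/2}+εI)Q(S^{1/2}+εI)+I)⁻¹(S^{1/2}+εI)`, which converges
as `ε → 0⁺` to `S^{1/2}(S^{1/2} Q S^{1/2} + I)⁻¹ S^{1/2}`; consequently any `I_z` dominated
by `(Q + S_ε⁻¹)⁻¹` for all `ε > 0` is dominated by the limit. -/
theorem stmt_5 {m : ℕ} (S Q : Matrix (Fin m) (Fin m) ℝ)
    (hS : S.PosSemidef) (hQ : Q.PosDef) :
    (∀ ε : ℝ, 0 < ε →
      (Q + ((hS.sqrt + ε • (1 : Matrix (Fin m) (Fin m) ℝ)) ^ 2)⁻¹)⁻¹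
        = (hS.sqrt + ε • 1) * ((hS.sqrt + ε • 1) * Q * (hS.sqrt + ε • 1) + 1)⁻¹
            * (hS.sqrt + ε • 1)) ∧
    Filter.Tendsto
      (fun ε : ℝ => (Q + ((hS.sqrt + ε • (1 : Matrix (Fin m) (Fin m) ℝ)) ^ 2)⁻¹)⁻¹)
      (nhdsWithin 0 (Set.Ioi 0))
      (nhds (hS.sqrt * (hS.sqrt * Q * hS.sqrt + 1)⁻¹ * hS.sqrt)) ∧
    (∀ Iz : Matrix (Fin m) (Fin m) ℝ,
      (∀ ε : ℝ, 0 < ε →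
        ((Q + ((hS.sqrt + ε • (1 : Matrix (Fin m) (Fin m) ℝ)) ^ 2)⁻¹)⁻¹ - Iz).PosSemidef) →
      (hS.sqrt * (hS.sqrt * Q * hS.sqrt + 1)⁻¹ * hS.sqrt - Iz).PosSemidef) := by
  set R : Matrix (Fin m) (Fin m) ℝ := hS.sqrt with hRdef
  have hRpsd : R.PosSemidef := by
    have hd : (diagonal ((RCLike.ofReal : ℝ → ℝ) ∘ (√·) ∘ hS.1.eigenvalues) : Matrix (Fin m) (Fin m) ℝ).PosSemidef :=
      posSemidef_diagonal_iff.mpr fun i => by simp [Real.sqrt_nonneg]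
    have := hd.mul_mul_conjTranspose_same (hS.1.eigenvectorUnitary : Matrix (Fin m) (Fin m) ℝ)
    simpa only [hRdef, Matrix.PosSemidef.sqrt, star_eq_conjTranspose] using this
  have hApd : ∀ ε : ℝ, 0 < ε → (R + ε • (1 : Matrix (Fin m) (Fin m) ℝ)).PosDef :=
    fun ε hε => Matrix.PosDef.posSemidef_add hRpsd (smul_one_posDef' hε)
  have part1 : ∀ ε : ℝ, 0 < ε →
      (Q + ((R + ε • (1 : Matrix (Fin m) (Fin m) ℝ)) ^ 2)⁻¹)⁻¹
        = (R + ε • 1) * ((R + ε • 1) * Q * (R + ε • 1) + 1)⁻¹ * (R + ε • 1) :=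
    fun ε hε => key_eq' hQ (hApd ε hε)
  -- The limit matrix pieces
  have hRQR : (R * Q * R).PosSemidef := by
    have := hQ.posSemidef.mul_mul_conjTranspose_same R
    rwa [hRpsd.isHermitian.eq] at this
  have hB0 : (R * Q * R + 1).PosDef := Matrix.PosDef.posSemidef_add hRQR Matrix.PosDef.one
  -- continuity
  have hcA : Continuous (fun ε : ℝ => R + ε • (1 : Matrix (Fin m) (Fin m) ℝ)) :=
    continuous_const.add (continuous_id.smul continuous_const)
  have hcB : Continuous (fun ε : ℝ =>
      (R + ε • (1 : Matrix (Fin m) (Fin m) ℝ)) * Q * (R + ε • 1) + 1) :=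
    ((hcA.matrix_mul continuous_const).matrix_mul hcA).add continuous_const
  have e0 : R + (0 : ℝ) • (1 : Matrix (Fin m) (Fin m) ℝ) = R := by simp
  have hinv : ContinuousAt Inv.inv (R * Q * R + 1) := by
    refine continuousAt_matrix_inv _ ?_
    exact NormedRing.inverse_continuousAt hB0.det_pos.ne'.isUnit.unit
  have hgc : ContinuousAt (fun ε : ℝ =>
      (R + ε • (1 : Matrix (Fin m) (Fin m) ℝ)) * ((R + ε • 1) * Q * (R + ε • 1) + 1)⁻¹
        * (R + ε • 1)) 0 := by
    have hinv' : ContinuousAt (fun ε : ℝ =>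
        ((R + ε • (1 : Matrix (Fin m) (Fin m) ℝ)) * Q * (R + ε • 1) + 1)⁻¹) 0 := by
      refine ContinuousAt.comp ?_ hcB.continuousAt
      simpa [e0] using hinv
    exact (hcA.continuousAt.mul hinv').mul hcA.continuousAt
  have hgt : Filter.Tendsto (fun ε : ℝ =>
      (R + ε • (1 : Matrix (Fin m) (Fin m) ℝ)) * ((R + ε • 1) * Q * (R + ε • 1) + 1)⁻¹
        * (R + ε • 1))
      (nhdsWithin 0 (Set.Ioi 0)) (nhds (R * (R * Q * R + 1)⁻¹ * R)) := by
    have := hgc.continuousWithinAt (s := Set.Ioi (0:ℝ))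
    unfold ContinuousWithinAt at this
    simpa [e0] using this
  have part2 : Filter.Tendsto
      (fun ε : ℝ => (Q + ((R + ε • (1 : Matrix (Fin m) (Fin m) ℝ)) ^ 2)⁻¹)⁻¹)
      (nhdsWithin 0 (Set.Ioi 0)) (nhds (R * (R * Q * R + 1)⁻¹ * R)) := by
    refine Filter.Tendsto.congr' ?_ hgt
    exact Filter.eventually_of_mem self_mem_nhdsWithin fun ε hε => (part1 ε hε).symm
  refine ⟨part1, part2, ?_⟩
  intro Iz hIz
  -- Hermitian parts
  have hLh : (R * (R * Q * R + 1)⁻¹ * R).IsHermitian := by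
    have h := Matrix.isHermitian_mul_mul_conjTranspose R hB0.isHermitian.inv
    rwa [hRpsd.isHermitian.eq] at h
  have hf1 : ((Q + ((R + (1:ℝ) • (1 : Matrix (Fin m) (Fin m) ℝ)) ^ 2)⁻¹)⁻¹).IsHermitian := by
    rw [part1 1 one_pos]
    have hA1 := hApd 1 one_pos
    have hB1 : ((R + (1:ℝ) • 1) * Q * (R + (1:ℝ) • 1) + 1).PosDef := by
      refine Matrix.PosDef.posSemidef_add ?_ Matrix.PosDef.one
      have := hQ.posSemidef.mul_mul_conjTranspose_same (R + (1:ℝ) • 1)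
      rwa [hA1.isHermitian.eq] at this
    have h := Matrix.isHermitian_mul_mul_conjTranspose (R + (1:ℝ) • 1) hB1.isHermitian.inv
    rwa [hA1.isHermitian.eq] at h
  have hIzh : Iz.IsHermitian := by
    have h1 := (hIz 1 one_pos).isHermitian
    have := hf1.sub h1
    simpa using this
  refine .of_dotProduct_mulVec_nonneg (hLh.sub hIzh) fun x => ?_
  -- quadratic form continuity
  have hφ : Continuous (fun M : Matrix (Fin m) (Fin m) ℝ => star x ⬝ᵥ M *ᵥ x) :=
    continuous_const.dotProduct (continuous_id.matrix_mulVec continuous_const)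
  have htq : Filter.Tendsto
      (fun ε : ℝ => star x ⬝ᵥ ((Q + ((R + ε • (1 : Matrix (Fin m) (Fin m) ℝ)) ^ 2)⁻¹)⁻¹) *ᵥ x)
      (nhdsWithin 0 (Set.Ioi 0)) (nhds (star x ⬝ᵥ (R * (R * Q * R + 1)⁻¹ * R) *ᵥ x)) :=
    (hφ.continuousAt.tendsto).comp part2
  have htq' : Filter.Tendsto
      (fun ε : ℝ => star x ⬝ᵥ ((Q + ((R + ε • (1 : Matrix (Fin m) (Fin m) ℝ)) ^ 2)⁻¹)⁻¹ - Iz) *ᵥ x)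
      (nhdsWithin 0 (Set.Ioi 0))
      (nhds (star x ⬝ᵥ (R * (R * Q * R + 1)⁻¹ * R - Iz) *ᵥ x)) := by
    simp only [Matrix.sub_mulVec, dotProduct_sub]
    exact htq.sub tendsto_const_nhds
  refine ge_of_tendsto htq' ?_
  exact Filter.eventually_of_mem self_mem_nhdsWithin fun ε hε => (hIz ε hε).dotProduct_mulVec_nonneg x
end
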